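/- There exists a positive integer A = A(d,c) depending only on d and c such that for every unimodular lattice Λ ⊂ ℝ^{d+c} and every index n, if the minimal vectors X_n(Λ), X_{n+1}(Λ), …, X_{n+A}(Λ) all exist, then q_{n+A}(Λ) ≥ 2·q_n(Λ) and r_{n+A}(Λ) ≤ (1/2)·r_n(Λ). -/

import Mathlib

open MeasureTheory Filter Topology

noncomputable section

/-- Horizontal component (first `d` coordinates) of `x ∈ ℝ^{d+c}`, in Euclidean `ℝ^d`;
`|x|_+ = ‖hp d c x‖`. -/
def hp (d c : ℕ) (x : Fin (d + c) → ℝ) : EuclideanSpace ℝ (Fin d) :=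
  WithLp.toLp 2 fun i => x (Fin.castAdd c i)

/-- Vertical component (last `c` coordinates) of `x ∈ ℝ^{d+c}`, in Euclidean `ℝ^c`;
the height is `|x|_- = ‖vp d c x‖`. -/
def vp (d c : ℕ) (x : Fin (d + c) → ℝ) : EuclideanSpace ℝ (Fin c) :=
  WithLp.toLp 2 fun j => x (Fin.natAdd d j)

/-- The lattice `M·ℤ^n ⊆ ℝ^n` spanned by the columns of `M`. -/
def latSet {n : ℕ} (M : Matrix (Fin n) (Fin n) ℝ) : Set (Fin n → ℝ) :=
  Set.range fun v : Fin n → ℤ => M.mulVec fun i => (v i : ℝ)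

/-- `X` is a minimal vector of `Λ ⊆ ℝ^{d+c}`: any nonzero `Y ∈ Λ` with `|Y|_+ ≤ |X|_+` and
`|Y|_- ≤ |X|_-` satisfies `|Y|_+ = |X|_+` and `|Y|_- = |X|_-`. -/
def IsMinVec (d c : ℕ) (Λ : Set (Fin (d + c) → ℝ)) (X : Fin (d + c) → ℝ) : Prop :=
  X ∈ Λ ∧ X ≠ 0 ∧ ∀ Y ∈ Λ, Y ≠ 0 → ‖hp d c Y‖ ≤ ‖hp d c X‖ → ‖vp d c Y‖ ≤ ‖vp d c X‖ →
    ‖hp d c Y‖ = ‖hp d c X‖ ∧ ‖vp d c Y‖ = ‖vp d c X‖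

/-- `X` and `Y` are (representatives of) consecutive minimal vectors of `Λ`, ordered by
height: no equivalence class of minimal vectors has height strictly between those of `X`
and `Y`. -/
def ConsecMin (d c : ℕ) (Λ : Set (Fin (d + c) → ℝ)) (X Y : Fin (d + c) → ℝ) : Prop :=
  IsMinVec d c Λ X ∧ IsMinVec d c Λ Y ∧ ‖vp d c X‖ < ‖vp d c Y‖ ∧
    ∀ Z, IsMinVec d c Λ Z → ‖vp d c X‖ < ‖vp d c Z‖ → ‖vp d c Y‖ ≤ ‖vp d c Z‖

lemma hp_sub' (d c : ℕ) (x y : Fin (d + c) → ℝ) :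
    hp d c (x - y) = hp d c x - hp d c y := rfl

lemma vp_sub' (d c : ℕ) (x y : Fin (d + c) → ℝ) :
    vp d c (x - y) = vp d c x - vp d c y := rfl

lemma hp_smul' (d c : ℕ) (a : ℝ) (x : Fin (d + c) → ℝ) :
    hp d c (a • x) = a • hp d c x := rfl

lemma vp_smul' (d c : ℕ) (a : ℝ) (x : Fin (d + c) → ℝ) :
    vp d c (a • x) = a • vp d c x := rfl

/-- **Growth rate of minimal vectors.** There is a positive integer `A = A(d,c)` such that
for every unimodular lattice `Λ = M·ℤ^{d+c}` and every chain `X 0, X 1, …, X A` of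
consecutive minimal vectors of `Λ`, one has `q_{n+A} ≥ 2·q_n` and `r_{n+A} ≤ (1/2)·r_n`
(here `n` corresponds to the start `X 0` of the chain). -/
theorem minimal_vectors_growth (d c : ℕ) (hd : 0 < d) (hc : 0 < c) :
    ∃ A : ℕ, 0 < A ∧
      ∀ M : Matrix (Fin (d + c)) (Fin (d + c)) ℝ, M.det = 1 →
        ∀ X : ℕ → (Fin (d + c) → ℝ),
          (∀ k < A, ConsecMin d c (latSet M) (X k) (X (k + 1))) →
          2 * ‖vp d c (X 0)‖ ≤ ‖vp d c (X A)‖ ∧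
          ‖hp d c (X A)‖ ≤ (1 / 2) * ‖hp d c (X 0)‖ := by
  refine ⟨5 ^ (d + c), by positivity, ?_⟩
  intro M hM X hX
  set A := 5 ^ (d + c) with hAdef
  have Apos : 0 < A := by positivity
  -- all X k, k ≤ A, are minimal vectors
  have hmin : ∀ k ≤ A, IsMinVec d c (latSet M) (X k) := by
    intro k hk
    rcases lt_or_eq_of_le hk with h | h
    · exact (hX k h).1
    · have h1 : A - 1 < A := by omega
      have h2 := (hX (A - 1) h1).2.1
      have h3 : A - 1 + 1 = A := by omega
      rw [h3] at h2
      rw [h]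
      exact h2
  have hqlt : ∀ k, k < A → ‖vp d c (X k)‖ < ‖vp d c (X (k + 1))‖ :=
    fun k hk => (hX k hk).2.2.1
  -- radii strictly decrease
  have hrlt : ∀ k, k < A → ‖hp d c (X (k + 1))‖ < ‖hp d c (X k)‖ := by
    intro k hk
    by_contra hcon
    push_neg at hcon
    have h1 := (hX k hk).1
    have h2 := (hX k hk).2.1
    have h3 := h2.2.2 (X k) h1.1 h1.2.1 hcon (le_of_lt (hqlt k hk))
    exact absurd h3.2 (ne_of_lt (hqlt k hk))
  have hq : ∀ j, j ≤ A → ∀ i, i < j → ‖vp d c (X i)‖ < ‖vp d c (X j)‖ := by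
    intro j
    induction j with
    | zero => intro _ i hi; omega
    | succ n ih =>
      intro hj i hi
      have hn : ‖vp d c (X n)‖ < ‖vp d c (X (n + 1))‖ := hqlt n (by omega)
      rcases Nat.lt_or_ge i n with h | h
      · exact (ih (by omega) i h).trans hn
      · have hin : i = n := by omega
        rw [hin]; exact hn
  have hr : ∀ j, j ≤ A → ∀ i, i < j → ‖hp d c (X j)‖ < ‖hp d c (X i)‖ := by
    intro j
    induction j with
    | zero => intro _ i hi; omega
    | succ n ih =>
      intro hj i hi
      have hn : ‖hp d c (X (n + 1))‖ < ‖hp d c (X n)‖ := hrlt n (by omega)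
      rcases Nat.lt_or_ge i n with h | h
      · exact hn.trans (ih (by omega) i h)
      · have hin : i = n := by omega
        rw [hin]; exact hn
  -- integer coordinates
  have hco : ∀ k : Fin (A + 1), ∃ v : Fin (d + c) → ℤ,
      (M.mulVec fun i => ((v i : ℝ))) = X k := by
    intro k
    exact Set.mem_range.mp (hmin k (Nat.lt_succ_iff.mp k.isLt)).1
  choose v hv using hco
  -- pigeonhole modulo 5
  obtain ⟨a, b, hab, hfab⟩ := Fintype.exists_ne_map_eq_of_card_lt
      (fun k : Fin (A + 1) => fun t => ((v k t : ZMod 5))) (by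
        simp only [Fintype.card_fun, ZMod.card, Fintype.card_fin]
        rw [← hAdef]
        exact Nat.lt_succ_self A)
  obtain ⟨i, j, hij, hfij⟩ : ∃ i j : Fin (A + 1), (i : ℕ) < (j : ℕ) ∧
      ∀ t, ((v i t : ZMod 5)) = ((v j t : ZMod 5)) := by
    rcases Ne.lt_or_gt hab with h | h
    · exact ⟨a, b, h, fun t => congrFun hfab t⟩
    · exact ⟨b, a, h, fun t => (congrFun hfab t).symm⟩
  have hdvd : ∀ t, (5 : ℤ) ∣ (v j t - v i t) := by
    intro t
    have h0 : ((v j t - v i t : ℤ) : ZMod 5) = 0 := by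
      push_cast
      rw [sub_eq_zero]
      exact (hfij t).symm
    exact (ZMod.intCast_zmod_eq_zero_iff_dvd _ 5).mp h0
  obtain ⟨w, hw⟩ : ∃ w : Fin (d + c) → ℤ, ∀ t, v j t - v i t = 5 * w t :=
    ⟨fun t => (v j t - v i t) / 5, fun t => (Int.mul_ediv_cancel' (hdvd t)).symm⟩
  set Z : Fin (d + c) → ℝ := M.mulVec fun t => ((w t : ℝ)) with hZdef
  have hZmem : Z ∈ latSet M := ⟨w, rfl⟩
  have harg : (fun t => ((v j t : ℝ))) - (fun t => ((v i t : ℝ)))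
      = (5 : ℝ) • fun t => ((w t : ℝ)) := by
    funext t
    have h1 := hw t
    have h2 : ((v j t - v i t : ℤ) : ℝ) = ((5 * w t : ℤ) : ℝ) := by rw [h1]
    push_cast at h2
    simp only [Pi.sub_apply, Pi.smul_apply, smul_eq_mul]
    linarith
  have h5Z : (5 : ℝ) • Z = X j - X i := by
    rw [hZdef, ← Matrix.mulVec_smul, ← harg, Matrix.mulVec_sub, hv i, hv j]
  have hZne : Z ≠ 0 := by
    intro h0
    rw [h0, smul_zero] at h5Z
    have hXij : X (j : ℕ) = X (i : ℕ) := by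
      have := h5Z.symm
      rwa [sub_eq_zero] at this
    have hlt := hq j (Nat.lt_succ_iff.mp j.isLt) i hij
    rw [hXij] at hlt
    exact lt_irrefl _ hlt
  -- norm bounds for Z
  have hpZ : 5 * ‖hp d c Z‖ ≤ ‖hp d c (X i)‖ + ‖hp d c (X j)‖ := by
    have h1 : ‖hp d c ((5 : ℝ) • Z)‖ = 5 * ‖hp d c Z‖ := by
      rw [hp_smul', norm_smul]
      simp
    have h2 : hp d c (X j - X i) = hp d c (X j) - hp d c (X i) := hp_sub' d c _ _
    calc 5 * ‖hp d c Z‖ = ‖hp d c ((5 : ℝ) • Z)‖ := h1.symm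
      _ = ‖hp d c (X j) - hp d c (X i)‖ := by rw [h5Z, h2]
      _ ≤ ‖hp d c (X j)‖ + ‖hp d c (X i)‖ := norm_sub_le _ _
      _ = ‖hp d c (X i)‖ + ‖hp d c (X j)‖ := by ring
  have hvZ : 5 * ‖vp d c Z‖ ≤ ‖vp d c (X i)‖ + ‖vp d c (X j)‖ := by
    have h1 : ‖vp d c ((5 : ℝ) • Z)‖ = 5 * ‖vp d c Z‖ := by
      rw [vp_smul', norm_smul]
      simp
    have h2 : vp d c (X j - X i) = vp d c (X j) - vp d c (X i) := vp_sub' d c _ _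
    calc 5 * ‖vp d c Z‖ = ‖vp d c ((5 : ℝ) • Z)‖ := h1.symm
      _ = ‖vp d c (X j) - vp d c (X i)‖ := by rw [h5Z, h2]
      _ ≤ ‖vp d c (X j)‖ + ‖vp d c (X i)‖ := norm_sub_le _ _
      _ = ‖vp d c (X i)‖ + ‖vp d c (X j)‖ := by ring
  -- comparison facts
  have hiA : (i : ℕ) ≤ A := Nat.lt_succ_iff.mp i.isLt
  have hjA : (j : ℕ) ≤ A := Nat.lt_succ_iff.mp j.isLt
  have hqij : ‖vp d c (X i)‖ < ‖vp d c (X j)‖ := hq j hjA i hij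
  have hrij : ‖hp d c (X j)‖ < ‖hp d c (X i)‖ := hr j hjA i hij
  have hq0A : ‖vp d c (X 0)‖ < ‖vp d c (X A)‖ := hq A le_rfl 0 Apos
  have hr0A : ‖hp d c (X A)‖ < ‖hp d c (X 0)‖ := hr A le_rfl 0 Apos
  have hq0i : ‖vp d c (X 0)‖ ≤ ‖vp d c (X i)‖ := by
    rcases Nat.eq_zero_or_pos (i : ℕ) with h | h
    · rw [h]
    · exact le_of_lt (hq i hiA 0 h)
  have hqjA : ‖vp d c (X j)‖ ≤ ‖vp d c (X A)‖ := by
    rcases eq_or_lt_of_le hjA with h | h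
    · rw [h]
    · exact le_of_lt (hq A le_rfl j h)
  have hri0 : ‖hp d c (X i)‖ ≤ ‖hp d c (X 0)‖ := by
    rcases Nat.eq_zero_or_pos (i : ℕ) with h | h
    · rw [h]
    · exact le_of_lt (hr i hiA 0 h)
  have hrAj : ‖hp d c (X A)‖ ≤ ‖hp d c (X j)‖ := by
    rcases eq_or_lt_of_le hjA with h | h
    · rw [h]
    · exact le_of_lt (hr A le_rfl j h)
  have hnnr : (0 : ℝ) ≤ ‖hp d c (X j)‖ := norm_nonneg _
  have hnnq : (0 : ℝ) ≤ ‖vp d c (X i)‖ := norm_nonneg _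
  constructor
  · -- heights double
    by_contra hcon
    push_neg at hcon
    have hq0pos : 0 < ‖vp d c (X 0)‖ := by linarith
    have hle1 : ‖hp d c Z‖ ≤ ‖hp d c (X i)‖ := by linarith
    have hlt2 : ‖vp d c Z‖ < ‖vp d c (X i)‖ := by linarith
    obtain ⟨-, h2⟩ := (hmin i hiA).2.2 Z hZmem hZne hle1 (le_of_lt hlt2)
    exact absurd h2 (ne_of_lt hlt2)
  · -- radii halve
    by_contra hcon
    push_neg at hcon
    have hr0pos : 0 < ‖hp d c (X 0)‖ := by linarith
    have hlt1 : ‖hp d c Z‖ < ‖hp d c (X j)‖ := by linarith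
    have hlt2 : ‖vp d c Z‖ < ‖vp d c (X j)‖ := by linarith
    obtain ⟨h1, -⟩ := (hmin j hjA).2.2 Z hZmem hZne (le_of_lt hlt1) (le_of_lt hlt2)
    exact absurd h1 (ne_of_lt hlt1)
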